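/- arXiv:2204.05628 — 8 statements merged into one kernel-verified Lean document; each statement's English description precedes it below -/
import Mathlib

section
/- If a simple graph G on k+3 vertices admits a colouring of its edges with k colours such that no two disjoint edges receive the same colour, then G contains two distinct non-adjacent vertices. -/
lemma key : ∀ (t : ℕ) {α : Type} [DecidableEq α] (V : Finset α),
    t + 3 ≤ V.card →
    ∀ c : α → α → Fin t,
    (∀ u v x y, u ∈ V → v ∈ V → x ∈ V → y ∈ V →
      u ≠ v → x ≠ y → u ≠ x → u ≠ y → v ≠ x → v ≠ y → c u v ≠ c x y) →
    False := by
  intro t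
  induction t with
  | zero =>
    intro α _ V hV c _
    obtain ⟨u, hu, v, hv, huv⟩ := Finset.one_lt_card.mp (show 1 < V.card by omega)
    exact (c u v).elim0
  | succ s ih =>
    intro α _ V hV c hc
    by_cases hA : ∃ i : Fin (s+1), ∃ x, x ∈ V ∧
        ∀ u v, u ∈ V → v ∈ V → u ≠ v → c u v = i → x = u ∨ x = v
    · obtain ⟨i, x, hxV, hcov⟩ := hA
      have hV' : s + 3 ≤ (V.erase x).card := by
        have := Finset.card_erase_of_mem hxV; omega
      rcases Nat.eq_zero_or_pos s with rfl | hs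
      · -- t = 1
        obtain ⟨u, hu, v, hv, huv⟩ :=
          Finset.one_lt_card.mp (show 1 < (V.erase x).card by omega)
        have h1 : c u v = i := by
          have h2 := (c u v).isLt
          have h3 := i.isLt
          exact Fin.ext_iff.mpr (by omega)
        rcases hcov u v (Finset.mem_of_mem_erase hu) (Finset.mem_of_mem_erase hv) huv h1 with
          rfl | rfl
        · exact (Finset.mem_erase.mp hu).1 rfl
        · exact (Finset.mem_erase.mp hv).1 rfl
      · obtain ⟨s', rfl⟩ := Nat.exists_eq_succ_of_ne_zero (by omega : s ≠ 0)
        set g : Fin (s'+2) → Fin (s'+1) := fun j =>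
          if h : (j : ℕ) < (i : ℕ) then ⟨j, by have := i.isLt; omega⟩
          else ⟨(j : ℕ) - 1, by have := j.isLt; omega⟩ with hg_def
        have hg : ∀ j j' : Fin (s'+2), j ≠ i → j' ≠ i → j ≠ j' → g j ≠ g j' := by
          intro j j' hj hj' hjj'
          have h1 : (j:ℕ) ≠ (i:ℕ) := fun h => hj (Fin.ext_iff.mpr h)
          have h2 : (j':ℕ) ≠ (i:ℕ) := fun h => hj' (Fin.ext_iff.mpr h)
          have h3 : (j:ℕ) ≠ (j':ℕ) := fun h => hjj' (Fin.ext_iff.mpr h)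
          simp only [hg_def]
          split_ifs with p1 p2 p2 <;>
          · intro hEq
            rw [Fin.mk.injEq] at hEq
            omega
        refine ih (V.erase x) (by omega) (fun u v => g (c u v)) ?_
        intro u v x' y' hu hv hx' hy' h1 h2 h3 h4 h5 h6
        have hu' := Finset.mem_of_mem_erase hu
        have hv' := Finset.mem_of_mem_erase hv
        have hx'' := Finset.mem_of_mem_erase hx'
        have hy'' := Finset.mem_of_mem_erase hy'
        have hne1 : c u v ≠ i := by
          intro h
          rcases hcov u v hu' hv' h1 h with rfl | rfl
          · exact (Finset.mem_erase.mp hu).1 rfl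
          · exact (Finset.mem_erase.mp hv).1 rfl
        have hne2 : c x' y' ≠ i := by
          intro h
          rcases hcov x' y' hx'' hy'' h2 h with rfl | rfl
          · exact (Finset.mem_erase.mp hx').1 rfl
          · exact (Finset.mem_erase.mp hy').1 rfl
        exact hg _ _ hne1 hne2 (hc u v x' y' hu' hv' hx'' hy'' h1 h2 h3 h4 h5 h6)
    · push_neg at hA
      have hint : ∀ (i : Fin (s+1)) p q r w, p ∈ V → q ∈ V → r ∈ V → w ∈ V →
          p ≠ q → r ≠ w → c p q = i → c r w = i →
          p = r ∨ p = w ∨ q = r ∨ q = w := by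
        intro i p q r w hp hq hr hw hpq hrw h1 h2
        by_contra h
        push_neg at h
        exact hc p q r w hp hq hr hw hpq hrw h.1 h.2.1 h.2.2.1 h.2.2.2 (h1.trans h2.symm)
      obtain ⟨x0, hx0⟩ := Finset.card_pos.mp (by omega : 0 < V.card)
      have hT : ∀ i : Fin (s+1), ∃ T : Finset α, T.card ≤ 3 ∧
          ∀ u v, u ∈ V → v ∈ V → u ≠ v → c u v = i → u ∈ T ∧ v ∈ T := by
        intro i
        obtain ⟨a, b, haV, hbV, hab, hcab, -, -⟩ := hA i x0 hx0
        obtain ⟨u, v, huV, hvV, huv, hcuv, hau, hav⟩ := hA i a haV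
        -- b is an endpoint of (u,v); c3 is the other endpoint
        obtain ⟨c3, hc3V, hbc3, hac3, hcbc3⟩ :
            ∃ c3, c3 ∈ V ∧ b ≠ c3 ∧ a ≠ c3 ∧ (c b c3 = i ∨ c c3 b = i) := by
          rcases hint i a b u v haV hbV huV hvV hab huv hcab hcuv with h | h | h | h
          · exact absurd h hau
          · exact absurd h hav
          · exact ⟨v, hvV, by rw [h]; exact huv, hav, Or.inl (by rw [h]; exact hcuv)⟩
          · exact ⟨u, huV, by rw [h]; exact fun h' => huv h'.symm, hau,
              Or.inr (by rw [h]; exact hcuv)⟩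
        have hba : b ≠ a := fun h => hab h.symm
        have hc3a : c3 ≠ a := fun h => hac3 h.symm
        have hc3b : c3 ≠ b := fun h => hbc3 h.symm
        have hAB : ∀ p q, p ∈ V → q ∈ V → p ≠ q → c p q = i →
            p = a ∨ p = b ∨ q = a ∨ q = b := by
          intro p q hp hq hpq hcpq
          rcases hint i a b p q haV hbV hp hq hab hpq hcab hcpq with h|h|h|h
          exacts [Or.inl h.symm, Or.inr (Or.inr (Or.inl h.symm)),
            Or.inr (Or.inl h.symm), Or.inr (Or.inr (Or.inr h.symm))]
        have hBC : ∀ p q, p ∈ V → q ∈ V → p ≠ q → c p q = i →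
            p = b ∨ p = c3 ∨ q = b ∨ q = c3 := by
          intro p q hp hq hpq hcpq
          rcases hcbc3 with h | h
          · rcases hint i b c3 p q hbV hc3V hp hq hbc3 hpq h hcpq with h'|h'|h'|h'
            exacts [Or.inl h'.symm, Or.inr (Or.inr (Or.inl h'.symm)),
              Or.inr (Or.inl h'.symm), Or.inr (Or.inr (Or.inr h'.symm))]
          · rcases hint i c3 b p q hc3V hbV hp hq hc3b hpq h hcpq with h'|h'|h'|h'
            exacts [Or.inr (Or.inl h'.symm), Or.inr (Or.inr (Or.inr h'.symm)),
              Or.inl h'.symm, Or.inr (Or.inr (Or.inl h'.symm))]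
        -- the pair avoiding b is exactly {a, c3}
        obtain ⟨p, q, hpV, hqV, hpq, hcpq, hbp, hbq⟩ := hA i b hbV
        have hpb : p ≠ b := fun h => hbp h.symm
        have hqb : q ≠ b := fun h => hbq h.symm
        have e1 : p = a ∨ q = a := by
          rcases hAB p q hpV hqV hpq hcpq with h|h|h|h
          exacts [Or.inl h, absurd h hpb, Or.inr h, absurd h hqb]
        have e2 : p = c3 ∨ q = c3 := by
          rcases hBC p q hpV hqV hpq hcpq with h|h|h|h
          exacts [absurd h hpb, Or.inl h, absurd h hqb, Or.inr h]
        have hpa : (p = a ∧ q = c3) ∨ (p = c3 ∧ q = a) := by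
          rcases e1 with h|h <;> rcases e2 with h'|h'
          exacts [absurd (h.symm.trans h') hac3, Or.inl ⟨h, h'⟩,
            Or.inr ⟨h', h⟩, absurd (h.symm.trans h') hac3]
        have hAC : ∀ p' q', p' ∈ V → q' ∈ V → p' ≠ q' → c p' q' = i →
            p' = a ∨ p' = c3 ∨ q' = a ∨ q' = c3 := by
          intro p' q' hp' hq' hpq' hcpq'
          have h := hint i p q p' q' hpV hqV hp' hq' hpq hpq' hcpq hcpq'
          rcases hpa with ⟨rfl, rfl⟩ | ⟨rfl, rfl⟩
          · rcases h with h'|h'|h'|h'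
            exacts [Or.inl h'.symm, Or.inr (Or.inr (Or.inl h'.symm)),
              Or.inr (Or.inl h'.symm), Or.inr (Or.inr (Or.inr h'.symm))]
          · rcases h with h'|h'|h'|h'
            exacts [Or.inr (Or.inl h'.symm), Or.inr (Or.inr (Or.inr h'.symm)),
              Or.inl h'.symm, Or.inr (Or.inr (Or.inl h'.symm))]
        have keymem : ∀ z w : α, (z=a∨z=b∨w=a∨w=b) → (z=b∨z=c3∨w=b∨w=c3) →
            (z=a∨z=c3∨w=a∨w=c3) → z=a∨z=b∨z=c3 := by
          intro z w d1 d2 d3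
          by_contra hz
          push_neg at hz
          obtain ⟨hz1, hz2, hz3⟩ := hz
          have f1 : w = a ∨ w = b := by
            rcases d1 with h|h|h|h
            exacts [absurd h hz1, absurd h hz2, Or.inl h, Or.inr h]
          have f2 : w = b ∨ w = c3 := by
            rcases d2 with h|h|h|h
            exacts [absurd h hz2, absurd h hz3, Or.inl h, Or.inr h]
          have f3 : w = a ∨ w = c3 := by
            rcases d3 with h|h|h|h
            exacts [absurd h hz1, absurd h hz3, Or.inl h, Or.inr h]
          rcases f1 with rfl | rfl
          · rcases f2 with h|h
            exacts [hab h, hac3 h]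
          · rcases f3 with h|h
            exacts [hba h, hbc3 h]
        refine ⟨{a, b, c3}, ?_, ?_⟩
        · have h1 := Finset.card_insert_le a ({b, c3} : Finset α)
          have h2 := Finset.card_insert_le b ({c3} : Finset α)
          simp only [Finset.card_singleton] at h1 h2
          omega
        · intro p' q' hp' hq' hpq' hcpq'
          have d1 := hAB p' q' hp' hq' hpq' hcpq'
          have d2 := hBC p' q' hp' hq' hpq' hcpq'
          have d3 := hAC p' q' hp' hq' hpq' hcpq'
          simp only [Finset.mem_insert, Finset.mem_singleton]
          refine ⟨keymem p' q' d1 d2 d3, keymem q' p' ?_ ?_ ?_⟩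
          · rcases d1 with h|h|h|h
            exacts [Or.inr (Or.inr (Or.inl h)), Or.inr (Or.inr (Or.inr h)),
              Or.inl h, Or.inr (Or.inl h)]
          · rcases d2 with h|h|h|h
            exacts [Or.inr (Or.inr (Or.inl h)), Or.inr (Or.inr (Or.inr h)),
              Or.inl h, Or.inr (Or.inl h)]
          · rcases d3 with h|h|h|h
            exacts [Or.inr (Or.inr (Or.inl h)), Or.inr (Or.inr (Or.inr h)),
              Or.inl h, Or.inr (Or.inl h)]
      choose T hT3 hTmem using hT
      have hsub : V.offDiag ⊆ Finset.univ.biUnion (fun i => T i ×ˢ T i) := by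
        intro p hp
        obtain ⟨hp1, hp2, hp3⟩ := Finset.mem_offDiag.mp hp
        refine Finset.mem_biUnion.mpr ⟨c p.1 p.2, Finset.mem_univ _, ?_⟩
        exact Finset.mem_product.mpr (hTmem (c p.1 p.2) p.1 p.2 hp1 hp2 hp3 rfl)
      have h1 : V.offDiag.card ≤ (s+1) * 9 := by
        calc V.offDiag.card ≤ (Finset.univ.biUnion fun i => T i ×ˢ T i).card :=
              Finset.card_le_card hsub
          _ ≤ ∑ i, (T i ×ˢ T i).card := Finset.card_biUnion_le
          _ ≤ ∑ _i : Fin (s+1), 9 := Finset.sum_le_sum (fun i _ => by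
              rw [Finset.card_product]
              calc (T i).card * (T i).card ≤ 3 * 3 := Nat.mul_le_mul (hT3 i) (hT3 i)
                _ = 9 := by norm_num)
          _ = (s+1) * 9 := by
              simp [Finset.sum_const, Finset.card_univ]
      have h2 : V.offDiag.card = V.card * V.card - V.card := Finset.offDiag_card V
      obtain ⟨m, hm⟩ : ∃ m, V.card = m + (s + 4) := ⟨V.card - (s+4), by omega⟩
      have h3 : V.card * V.card ≤ (s+1) * 9 + V.card := by omega
      rw [hm] at h3
      nlinarith [sq_nonneg s, sq_nonneg m, Nat.zero_le (m*s)]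

theorem stmt3 (k : ℕ) (G : SimpleGraph (Fin (k + 3)))
    (c : G.edgeSet → Fin k)
    (hc : ∀ e f : G.edgeSet, (∀ x, x ∈ e.val → x ∉ f.val) → c e ≠ c f) :
    ∃ u v : Fin (k + 3), u ≠ v ∧ ¬ G.Adj u v := by
  by_contra h
  push_neg at h
  have hadj : ∀ u v : Fin (k+3), u ≠ v → G.Adj u v := h
  have h01 : (⟨0, by omega⟩ : Fin (k+3)) ≠ ⟨1, by omega⟩ := by
    simp [Fin.ext_iff]
  have hmem : ∀ u v : Fin (k+3), u ≠ v → s(u, v) ∈ G.edgeSet := by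
    intro u v huv
    exact (SimpleGraph.mem_edgeSet G).mpr (hadj u v huv)
  set junk : Fin k := c ⟨s((⟨0, by omega⟩ : Fin (k+3)), ⟨1, by omega⟩), hmem _ _ h01⟩ with hj
  set c2 : Fin (k+3) → Fin (k+3) → Fin k := fun u v =>
    if h' : u ≠ v then c ⟨s(u, v), hmem u v h'⟩ else junk with hc2
  refine key k (Finset.univ : Finset (Fin (k+3))) (by simp) c2 ?_
  intro u v x y _ _ _ _ huv hxy hux huy hvx hvy
  simp only [hc2, dif_pos huv, dif_pos hxy]
  apply hc
  intro z hz hz'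
  rw [Sym2.mem_iff] at hz hz'
  rcases hz with rfl | rfl <;> rcases hz' with h' | h'
  exacts [hux h', huy h', hvx h', hvy h']
end

section
/- For every natural number k, the complete graph on k+3 vertices has no (k,2)-edge co-colouring; that is, for any assignment of k colours to the edges of K_{k+3}, there exist two vertex-disjoint edges with the same colour. -/
open Finset

lemma star_of_intersecting {V : Type*} [DecidableEq V] (F : Finset (Sym2 V))
    (hd : ∀ e ∈ F, ¬ e.IsDiag)
    (hi : ∀ e ∈ F, ∀ f ∈ F, ∃ x, x ∈ e ∧ x ∈ f)
    (hc : 3 < F.card) : ∃ v, ∀ e ∈ F, v ∈ e := by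
  by_contra h
  push_neg at h
  obtain ⟨e1, he1⟩ := Finset.card_pos.mp (Nat.lt_of_le_of_lt (Nat.zero_le 3) hc)
  induction e1 using Sym2.ind with
  | _ a b =>
  have hab : a ≠ b := fun hh => hd _ he1 (Sym2.mk_isDiag_iff.mpr hh)
  obtain ⟨e2, he2, ha2⟩ := h a
  obtain ⟨e3, he3, hb3⟩ := h b
  have hb2 : b ∈ e2 := by
    obtain ⟨x, hx1, hx2⟩ := hi _ he1 _ he2
    rcases Sym2.mem_iff.mp hx1 with rfl | rfl
    · exact absurd hx2 ha2
    · exact hx2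
  have ha3 : a ∈ e3 := by
    obtain ⟨x, hx1, hx3⟩ := hi _ he1 _ he3
    rcases Sym2.mem_iff.mp hx1 with rfl | rfl
    · exact hx3
    · exact absurd hx3 hb3
  obtain ⟨x, hx2, hx3⟩ := hi _ he2 _ he3
  have hxa : x ≠ a := fun hh => ha2 (hh ▸ hx2)
  have hxb : x ≠ b := fun hh => hb3 (hh ▸ hx3)
  have he2eq : e2 = s(b, x) := (Sym2.mem_and_mem_iff (Ne.symm hxb)).mp ⟨hb2, hx2⟩
  have he3eq : e3 = s(a, x) := (Sym2.mem_and_mem_iff (Ne.symm hxa)).mp ⟨ha3, hx3⟩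
  have hsub : F ⊆ {s(a, b), e2, e3} := by
    intro e he
    simp only [Finset.mem_insert, Finset.mem_singleton]
    by_cases hx : x ∈ e
    · obtain ⟨y, hy, hy1⟩ := hi _ he _ he1
      rcases Sym2.mem_iff.mp hy1 with rfl | rfl
      · right; right
        rw [he3eq]
        exact ((Sym2.mem_and_mem_iff hxa).mp ⟨hx, hy⟩).trans (Sym2.eq_swap)
      · right; left
        rw [he2eq]
        exact ((Sym2.mem_and_mem_iff hxb).mp ⟨hx, hy⟩).trans (Sym2.eq_swap)
    · have hbe : b ∈ e := by
        obtain ⟨y, hy, hy2⟩ := hi _ he _ he2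
        rw [he2eq, Sym2.mem_iff] at hy2
        rcases hy2 with rfl | rfl
        · exact hy
        · exact absurd hy hx
      have hae : a ∈ e := by
        obtain ⟨y, hy, hy3⟩ := hi _ he _ he3
        rw [he3eq, Sym2.mem_iff] at hy3
        rcases hy3 with rfl | rfl
        · exact hy
        · exact absurd hy hx
      left
      exact (Sym2.mem_and_mem_iff hab).mp ⟨hae, hbe⟩
  have := (Finset.card_le_card hsub).trans (Finset.card_insert_le _ _)
  have := Finset.card_insert_le e2 ({e3} : Finset (Sym2 V))
  simp [Finset.card_singleton] at *
  omega

lemma map_nondiag {α β : Type*} {f : α → β} (hf : Function.Injective f) (z : Sym2 α)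
    (h : ¬ z.IsDiag) : ¬ (z.map f).IsDiag := by
  induction z using Sym2.ind with
  | _ a b => simpa [hf.eq_iff] using h

lemma main_lemma : ∀ k n (c : Sym2 (Fin (n + 3)) → Fin k), k ≤ n →
    ∃ e f : Sym2 (Fin (n + 3)), ¬ e.IsDiag ∧ ¬ f.IsDiag ∧ (∀ x, x ∈ e → x ∉ f) ∧ c e = c f := by
  intro k
  induction k with
  | zero => intro n c _; exact (c s(0, 0)).elim0
  | succ k IH =>
    intro n c hkn
    by_contra H
    push_neg at H
    obtain ⟨m, rfl⟩ : ∃ m, n = m + 1 := ⟨n - 1, by omega⟩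
    set s := (⊤ : SimpleGraph (Fin (m + 1 + 3))).edgeFinset with hs
    have hmem : ∀ e : Sym2 (Fin (m + 1 + 3)), e ∈ s ↔ ¬ e.IsDiag := by
      intro e
      rw [hs, SimpleGraph.mem_edgeFinset, SimpleGraph.edgeSet_top]
      rfl
    have hcard : (Finset.univ : Finset (Fin (k + 1))).card * 3 < s.card := by
      rw [hs, SimpleGraph.card_edgeFinset_top_eq_card_choose_two]
      simp only [Finset.card_univ, Fintype.card_fin]
      have e1 : (m + 1 + 3).choose 2 = (m + 3).choose 1 + (m + 3).choose 2 :=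
        Nat.choose_succ_succ (m + 3) 1
      have e2 : (m + 3).choose 2 = (m + 2).choose 1 + (m + 2).choose 2 :=
        Nat.choose_succ_succ (m + 2) 1
      have e3 : (m + 2).choose 2 = (m + 1).choose 1 + (m + 1).choose 2 :=
        Nat.choose_succ_succ (m + 1) 1
      have f1 : (m + 3).choose 1 = m + 3 := Nat.choose_one_right _
      have f2 : (m + 2).choose 1 = m + 2 := Nat.choose_one_right _
      have f3 : (m + 1).choose 1 = m + 1 := Nat.choose_one_right _
      omega
    obtain ⟨i, -, hi4⟩ := Finset.exists_lt_card_fiber_of_mul_lt_card_of_maps_to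
      (fun a _ => Finset.mem_univ (c a)) hcard
    set F : Finset (Sym2 (Fin (m + 1 + 3))) := {x ∈ s | c x = i} with hF
    have hFd : ∀ e ∈ F, ¬ e.IsDiag := fun e he => (hmem e).mp (Finset.mem_filter.mp he).1
    have hFc : ∀ e ∈ F, c e = i := fun e he => (Finset.mem_filter.mp he).2
    have hFi : ∀ e ∈ F, ∀ f ∈ F, ∃ x, x ∈ e ∧ x ∈ f := by
      intro e he f hf
      by_contra hx
      push_neg at hx
      exact H e f (hFd e he) (hFd f hf) hx ((hFc e he).trans (hFc f hf).symm)
    obtain ⟨v, hv⟩ := star_of_intersecting F hFd hFi hi4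
    set ι : Fin (m + 3) → Fin (m + 1 + 3) := v.succAbove with hι
    have hιinj : Function.Injective ι := Fin.succAbove_right_injective
    have hnotmem : ∀ z : Sym2 (Fin (m + 3)), v ∉ z.map ι := by
      intro z hvz
      obtain ⟨a, -, ha⟩ := Sym2.mem_map.mp hvz
      exact Fin.succAbove_ne v a ha
    have key : ∀ z : Sym2 (Fin (m + 3)), ¬ z.IsDiag → c (z.map ι) ≠ i := by
      intro z hz hc
      have : z.map ι ∈ F := Finset.mem_filter.mpr ⟨(hmem _).mpr (map_nondiag hιinj z hz), hc⟩
      exact hnotmem z (hv _ this)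
    -- Fin k is nonempty
    have hne : c (Sym2.map ι s(0, 1)) ≠ i := key _ (by simp [Sym2.mk_isDiag_iff])
    obtain ⟨d0, -⟩ := Fin.exists_succAbove_eq hne
    set c' : Sym2 (Fin (m + 3)) → Fin k := fun z =>
      if h : c (z.map ι) = i then d0 else (Fin.exists_succAbove_eq h).choose with hc'
    have hc'spec : ∀ z : Sym2 (Fin (m + 3)), ¬ z.IsDiag →
        i.succAbove (c' z) = c (z.map ι) := by
      intro z hz
      have h := key z hz
      simp only [hc', dif_neg h]
      exact (Fin.exists_succAbove_eq h).choose_spec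
    obtain ⟨e', f', hde, hdf, hdisj, hcc⟩ := IH m c' (by omega)
    refine H (e'.map ι) (f'.map ι) (map_nondiag hιinj e' hde) (map_nondiag hιinj f' hdf) ?_ ?_
    · intro x hxe hxf
      obtain ⟨a, ha, rfl⟩ := Sym2.mem_map.mp hxe
      obtain ⟨b, hb, hab⟩ := Sym2.mem_map.mp hxf
      exact hdisj a ha (hιinj hab ▸ hb)
    · rw [← hc'spec e' hde, ← hc'spec f' hdf, hcc]

theorem stmt4 (k : ℕ) (c : Sym2 (Fin (k + 3)) → Fin k) :
    ∃ e f : Sym2 (Fin (k + 3)),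
      e ∈ (⊤ : SimpleGraph (Fin (k + 3))).edgeSet ∧
      f ∈ (⊤ : SimpleGraph (Fin (k + 3))).edgeSet ∧
      (∀ x, x ∈ e → x ∉ f) ∧ c e = c f := by
  obtain ⟨e, f, hde, hdf, hdisj, hcc⟩ := main_lemma k k c le_rfl
  exact ⟨e, f, by rw [SimpleGraph.edgeSet_top]; exact hde,
    by rw [SimpleGraph.edgeSet_top]; exact hdf, hdisj, hcc⟩
end

section
/- For every k ≥ 3, the complete graph on 10k vertices has no (k,3)-edge co-colouring; that is, for any colouring of the edges of K_{10k} with k colours, there exist three pairwise vertex-disjoint edges all of the same colour. -/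
theorem stmt6 (k : ℕ) (hk : 3 ≤ k) (c : Sym2 (Fin (10 * k)) → Fin k) :
    ∃ e₁ e₂ e₃ : Sym2 (Fin (10 * k)),
      e₁ ∈ (⊤ : SimpleGraph (Fin (10 * k))).edgeSet ∧
      e₂ ∈ (⊤ : SimpleGraph (Fin (10 * k))).edgeSet ∧
      e₃ ∈ (⊤ : SimpleGraph (Fin (10 * k))).edgeSet ∧
      (∀ x, x ∈ e₁ → x ∉ e₂) ∧ (∀ x, x ∈ e₁ → x ∉ e₃) ∧ (∀ x, x ∈ e₂ → x ∉ e₃) ∧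
      c e₁ = c e₂ ∧ c e₂ = c e₃ := by
  have hv1 : ∀ i : Fin (5 * k), 2 * i.val < 10 * k := by intro i; have := i.2; omega
  have hv2 : ∀ i : Fin (5 * k), 2 * i.val + 1 < 10 * k := by intro i; have := i.2; omega
  set e : Fin (5 * k) → Sym2 (Fin (10 * k)) := fun i =>
    s(⟨2 * i.val, hv1 i⟩, ⟨2 * i.val + 1, hv2 i⟩) with he
  have hmem : ∀ i, e i ∈ (⊤ : SimpleGraph (Fin (10 * k))).edgeSet := by
    intro i
    simp only [he, SimpleGraph.mem_edgeSet, SimpleGraph.top_adj, ne_eq, Fin.mk.injEq]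
    omega
  have hdisj : ∀ i j : Fin (5 * k), i ≠ j → ∀ x, x ∈ e i → x ∉ e j := by
    intro i j hij x hx hx'
    have hij' : i.val ≠ j.val := fun h => hij (Fin.ext h)
    simp only [he, Sym2.mem_iff] at hx hx'
    rcases hx with h | h <;> rcases hx' with h' | h' <;>
      · rw [h] at h'
        have := congrArg Fin.val h'
        simp at this; omega
  obtain ⟨y, -, hy⟩ := Finset.exists_lt_card_fiber_of_mul_lt_card_of_maps_to
    (s := (Finset.univ : Finset (Fin (5 * k)))) (t := (Finset.univ : Finset (Fin k)))
    (f := fun i => c (e i)) (n := 2) (fun a _ => Finset.mem_univ _)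
    (by simp only [Finset.card_univ, Fintype.card_fin]; omega)
  set S := Finset.univ.filter (fun i => c (e i) = y) with hS
  obtain ⟨a, ha⟩ := Finset.card_pos.mp (by omega : 0 < S.card)
  obtain ⟨b, hb⟩ := Finset.card_pos.mp
    (by rw [Finset.card_erase_of_mem ha]; omega : 0 < (S.erase a).card)
  obtain ⟨d, hd⟩ := Finset.card_pos.mp
    (by rw [Finset.card_erase_of_mem hb, Finset.card_erase_of_mem ha]; omega :
      0 < ((S.erase a).erase b).card)
  have hba : b ≠ a := (Finset.mem_erase.mp hb).1
  have hdb : d ≠ b := (Finset.mem_erase.mp hd).1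
  have hda : d ≠ a := (Finset.mem_erase.mp ((Finset.mem_erase.mp hd).2)).1
  have hbS : b ∈ S := (Finset.mem_erase.mp hb).2
  have hdS : d ∈ S := (Finset.mem_erase.mp ((Finset.mem_erase.mp hd).2)).2
  have ca : c (e a) = y := (Finset.mem_filter.mp ha).2
  have cb : c (e b) = y := (Finset.mem_filter.mp hbS).2
  have cd : c (e d) = y := (Finset.mem_filter.mp hdS).2
  exact ⟨e a, e b, e d, hmem a, hmem b, hmem d,
    hdisj a b (fun h => hba h.symm), hdisj a d (fun h => hda h.symm), hdisj b d hdb.symm,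
    ca.trans cb.symm, cb.trans cd.symm⟩
end

section
/- Let n ≥ 1 and k ≥ 1, and let f be a function from subsets of {1,...,n} to {1,...,k} such that for every partition of {1,...,n} into parts A_1,...,A_p (p ∈ {1,...,n}), the multiset f(A_1),...,f(A_p) has a unique maximum. Fix a partition A_1,...,A_p of {1,...,n} whose unique maximum value under f equals the unique maximum of f({1}),...,f({n}). If the maximum of the partition is attained at part A_i and the maximum over singletons is attained at {j}, then j ∈ A_i. -/
theorem stmt8 (n k : ℕ) (hn : 1 ≤ n) (hk : 1 ≤ k)
    (f : Finset (Fin n) → ℕ) (hrange : ∀ S, 1 ≤ f S ∧ f S ≤ k)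
    (hpart : ∀ P : Finset (Finset (Fin n)),
      (∀ A ∈ P, A.Nonempty) →
      (P : Set (Finset (Fin n))).PairwiseDisjoint id →
      P.sup id = Finset.univ →
      ∃ A ∈ P, ∀ B ∈ P, B ≠ A → f B < f A)
    (P : Finset (Finset (Fin n)))
    (hPne : ∀ A ∈ P, A.Nonempty)
    (hPdisj : (P : Set (Finset (Fin n))).PairwiseDisjoint id)
    (hPcover : P.sup id = Finset.univ)
    (A : Finset (Fin n)) (hA : A ∈ P)
    (hAmax : ∀ B ∈ P, B ≠ A → f B < f A)
    (j : Fin n) (hj : ∀ j' : Fin n, j' ≠ j → f {j'} < f {j})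
    (heq : f A = f ({j} : Finset (Fin n))) :
    j ∈ A := by
  by_contra hjA
  set Q : Finset (Finset (Fin n)) :=
    insert A ((Finset.univ \ A).image fun x => ({x} : Finset (Fin n))) with hQ
  have hAQ : A ∈ Q := Finset.mem_insert_self _ _
  have hsing : ∀ x : Fin n, x ∉ A → ({x} : Finset (Fin n)) ∈ Q := by
    intro x hx
    exact Finset.mem_insert_of_mem (Finset.mem_image.2 ⟨x, by simp [hx], rfl⟩)
  have hjQ : ({j} : Finset (Fin n)) ∈ Q := hsing j hjA
  have hAj : A ≠ ({j} : Finset (Fin n)) := by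
    intro h; exact hjA (h ▸ Finset.mem_singleton_self j)
  have hmem : ∀ B ∈ Q, B = A ∨ ∃ x, x ∉ A ∧ B = ({x} : Finset (Fin n)) := by
    intro B hB
    rcases Finset.mem_insert.1 hB with h | h
    · exact Or.inl h
    · rcases Finset.mem_image.1 h with ⟨x, hx, rfl⟩
      exact Or.inr ⟨x, (Finset.mem_sdiff.1 hx).2, rfl⟩
  obtain ⟨C, hCQ, hCmax⟩ := hpart Q
    (by
      intro B hB
      rcases hmem B hB with hBA | ⟨x, _, hBx⟩
      · subst hBA; exact hPne B hA
      · subst hBx; exact Finset.singleton_nonempty x)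
    (by
      intro B hB D hD hBD
      rcases hmem B hB with hBA | ⟨x, hx, hBx⟩ <;>
        rcases hmem D hD with hDA | ⟨y, hy, hDy⟩
      · exact absurd (hBA.trans hDA.symm) hBD
      · subst hBA; subst hDy
        simp only [Function.onFun, id_eq, Finset.disjoint_singleton_right]; exact hy
      · subst hDA; subst hBx
        simp only [Function.onFun, id_eq, Finset.disjoint_singleton_left]; exact hx
      · subst hBx; subst hDy
        simp only [Function.onFun, id_eq, Finset.disjoint_singleton_right, Finset.mem_singleton]
        intro h; exact hBD (by rw [h])
    )
    (by
      apply Finset.eq_univ_of_forall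
      intro i
      rw [Finset.mem_sup]
      by_cases hi : i ∈ A
      · exact ⟨A, hAQ, hi⟩
      · exact ⟨{i}, hsing i hi, Finset.mem_singleton_self i⟩)
  rcases hmem C hCQ with hCA | ⟨x, hx, hCx⟩
  · subst hCA
    have := hCmax _ hjQ (Ne.symm hAj)
    omega
  · subst hCx
    have h1 := hCmax A hAQ (fun h => hx (h ▸ Finset.mem_singleton_self x))
    by_cases hxj : x = j
    · subst hxj; omega
    · have := hj x hxj; omega
end

section
/- Let k ≥ 3 and r ≥ k+2, and let f : 2^{[r+2]} → [k] be a function such that for every partition of [r+2] into r (possibly empty) parts A_1,...,A_r, the sequence f(A_1),...,f(A_r) has a unique maximum. Then f({1}),...,f({r+2}) has a unique maximum. -/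
lemma pair_other {α : Type*} [DecidableEq α] {e : Finset α} {y : α}
    (he : e.card = 2) (hy : y ∈ e) : ∃ z, z ≠ y ∧ e = {y, z} := by
  obtain ⟨p, q, hpq, rfl⟩ := Finset.card_eq_two.mp he
  rcases Finset.mem_insert.mp hy with rfl | h
  · exact ⟨q, fun h => hpq h.symm, rfl⟩
  · rw [Finset.mem_singleton] at h; subst h
    exact ⟨p, hpq, Finset.pair_comm p y⟩

lemma mem_of_pair {α : Type*} [DecidableEq α] {x y u : α} {e : Finset α}
    (hu : u ∈ ({x, y} : Finset α)) (hue : u ∈ e) (hx : x ∉ e) : y ∈ e := by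
  rcases Finset.mem_insert.mp hu with h | h
  · subst h; exact absurd hue hx
  · rw [Finset.mem_singleton] at h; subst h; exact hue

lemma triangle_bound {α : Type*} [DecidableEq α] (F : Finset (Finset α))
    (h2 : ∀ e ∈ F, e.card = 2)
    (hint : ∀ e ∈ F, ∀ e' ∈ F, ¬ Disjoint e e')
    (hns : ∀ v : α, ∃ e ∈ F, v ∉ e) : F.card ≤ 3 := by
  rcases F.eq_empty_or_nonempty with rfl | ⟨e1, he1⟩
  · simp
  obtain ⟨x, y, hxy, rfl⟩ := Finset.card_eq_two.mp (h2 e1 he1)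
  obtain ⟨e2, he2, hxe2⟩ := hns x
  obtain ⟨u, hu1, hu2⟩ := Finset.not_disjoint_iff.mp (hint _ he1 _ he2)
  have hy2 : y ∈ e2 := mem_of_pair hu1 hu2 hxe2
  obtain ⟨z, hzy, rfl⟩ := pair_other (h2 e2 he2) hy2
  have hzx : z ≠ x := fun h => hxe2 (by simp [h])
  obtain ⟨e3, he3, hye3⟩ := hns y
  have hxe3 : x ∈ e3 := by
    obtain ⟨u, hu1, hu2⟩ := Finset.not_disjoint_iff.mp (hint _ he1 _ he3)
    exact mem_of_pair (by rwa [Finset.pair_comm] at hu1) hu2 hye3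
  have hze3 : z ∈ e3 := by
    obtain ⟨u, hu1, hu2⟩ := Finset.not_disjoint_iff.mp (hint _ he2 _ he3)
    exact mem_of_pair hu1 hu2 hye3
  have he3' : e3 = {x, z} := by
    refine (Finset.eq_of_subset_of_card_le ?_ ?_).symm
    · intro w hw
      rcases Finset.mem_insert.mp hw with rfl | hw
      · exact hxe3
      · rw [Finset.mem_singleton.mp hw]; exact hze3
    · rw [h2 _ he3, Finset.card_insert_of_notMem (by simpa using hzx.symm), Finset.card_singleton]
  subst he3'
  have hsub : F ⊆ {({x, y} : Finset α), {y, z}, {x, z}} := by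
    intro e he
    simp only [Finset.mem_insert, Finset.mem_singleton]
    by_cases hx : x ∈ e
    · obtain ⟨w, hwx, rfl⟩ := pair_other (h2 e he) hx
      obtain ⟨u, hu1, hu2⟩ := Finset.not_disjoint_iff.mp (hint _ he _ he2)
      have hxne2 : x ∉ ({y, z} : Finset α) := by
        simp only [Finset.mem_insert, Finset.mem_singleton]
        push_neg
        exact ⟨hxy, Ne.symm hzx⟩
      have hw : w ∈ ({y, z} : Finset α) := mem_of_pair hu1 hu2 hxne2
      rcases Finset.mem_insert.mp hw with rfl | h
      · left; rfl
      · rw [Finset.mem_singleton.mp h]; right; right; rfl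
    · have hy : y ∈ e := by
        obtain ⟨u, hu1, hu2⟩ := Finset.not_disjoint_iff.mp (hint _ he1 _ he)
        exact mem_of_pair hu1 hu2 hx
      have hz : z ∈ e := by
        obtain ⟨u, hu1, hu2⟩ := Finset.not_disjoint_iff.mp (hint _ he3 _ he)
        exact mem_of_pair hu1 hu2 hx
      obtain ⟨w, hwy, rfl⟩ := pair_other (h2 e he) hy
      right; left
      rcases Finset.mem_insert.mp hz with h | h
      · exact absurd h hzy
      · rw [Finset.mem_singleton] at h; subst h; rfl
  refine (Finset.card_le_card hsub).trans ?_
  refine (Finset.card_insert_le _ _).trans (Nat.succ_le_succ ?_)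
  refine (Finset.card_insert_le _ _).trans (Nat.succ_le_succ ?_)
  simp

lemma kneser_bound {α : Type*} [DecidableEq α] (c : Finset α → ℕ) (V : Finset α) :
    (∀ e ⊆ V, ∀ e' ⊆ V, e.card = 2 → e'.card = 2 → Disjoint e e' → c e ≠ c e') →
    V.card ≤ ((V.powersetCard 2).image c).card + 2 := by
  induction V using Finset.strongInduction with
  | _ V ih =>
  intro h
  by_cases hV2 : V.card ≤ 2
  · omega
  set P := V.powersetCard 2 with hP
  set T := P.image c with hT
  by_cases hstar : ∃ v ∈ V, ∃ e ∈ P, v ∈ e ∧ ∀ e' ∈ P, c e' = c e → v ∈ e'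
  · obtain ⟨v, hv, e, heP, hve, hall⟩ := hstar
    have hsub : V.erase v ⊂ V := Finset.erase_ssubset hv
    have hIH := ih _ hsub (fun e1 h1 e2 h2 hc1 hc2 hd =>
      h e1 (h1.trans (Finset.erase_subset _ _)) e2 (h2.trans (Finset.erase_subset _ _)) hc1 hc2 hd)
    have hT' : ((V.erase v).powersetCard 2).image c ⊆ T.erase (c e) := by
      intro s hs
      obtain ⟨p, hp, rfl⟩ := Finset.mem_image.mp hs
      rw [Finset.mem_powersetCard] at hp
      have hpP : p ∈ P := Finset.mem_powersetCard.mpr ⟨hp.1.trans (Finset.erase_subset _ _), hp.2⟩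
      refine Finset.mem_erase.mpr ⟨?_, Finset.mem_image_of_mem c hpP⟩
      intro hcp
      exact (Finset.mem_erase.mp (hp.1 (hall p hpP hcp))).1 rfl
    have hceT : c e ∈ T := Finset.mem_image_of_mem c heP
    have h1 : (((V.erase v).powersetCard 2).image c).card ≤ T.card - 1 := by
      refine (Finset.card_le_card hT').trans ?_
      rw [Finset.card_erase_of_mem hceT]
    have h2 : (V.erase v).card = V.card - 1 := Finset.card_erase_of_mem hv
    have h3 : 1 ≤ T.card := Finset.card_pos.mpr ⟨_, hceT⟩
    omega
  · push_neg at hstar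
    have hfib : ∀ t ∈ T, (P.filter fun p => c p = t).card ≤ 3 := by
      intro t ht
      obtain ⟨e0, he0, hce0⟩ := Finset.mem_image.mp ht
      apply triangle_bound
      · intro p hp
        exact (Finset.mem_powersetCard.mp (Finset.mem_filter.mp hp).1).2
      · intro p hp p' hp' hd
        obtain ⟨hpP, hpc⟩ := Finset.mem_filter.mp hp
        obtain ⟨hp'P, hp'c⟩ := Finset.mem_filter.mp hp'
        rw [Finset.mem_powersetCard] at hpP hp'P
        exact h p hpP.1 p' hp'P.1 hpP.2 hp'P.2 hd (hpc.trans hp'c.symm)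
      · intro w
        by_cases hw : w ∈ e0
        · have hwV : w ∈ V := (Finset.mem_powersetCard.mp he0).1 hw
          obtain ⟨e', he'P, hce', hwe'⟩ := hstar w hwV e0 he0 hw
          exact ⟨e', Finset.mem_filter.mpr ⟨he'P, hce'.trans hce0⟩, hwe'⟩
        · exact ⟨e0, Finset.mem_filter.mpr ⟨he0, hce0⟩, hw⟩
    have hcount : P.card = ∑ t ∈ T, (P.filter fun p => c p = t).card :=
      Finset.card_eq_sum_card_fiberwise (fun p hp => Finset.mem_image_of_mem c hp)
    have hPle : P.card ≤ 3 * T.card := by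
      rw [hcount]
      calc ∑ t ∈ T, (P.filter fun p => c p = t).card ≤ ∑ _t ∈ T, 3 := Finset.sum_le_sum hfib
        _ = 3 * T.card := by rw [Finset.sum_const, smul_eq_mul, mul_comm]
    have hPcard : P.card = (V.card).choose 2 := Finset.card_powersetCard 2 V
    by_contra hcon
    push_neg at hcon
    set n := V.card with hn
    have hch : n.choose 2 = n * (n - 1) / 2 := Nat.choose_two_right n
    have heven : 2 * (n * (n - 1) / 2) = n * (n - 1) := by
      refine Nat.two_mul_div_two_of_even ?_
      rcases n with _ | m
      · simp
      · simpa [Nat.mul_comm] using Nat.even_mul_succ_self m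
    have hfin : n * (n - 1) ≤ 6 * (n - 3) := by omega
    obtain ⟨m, hm⟩ : ∃ m, n = m + 3 := ⟨n - 3, by omega⟩
    rw [hm, show m + 3 - 1 = m + 2 from rfl, Nat.add_sub_cancel] at hfin
    have hmm : m ≤ m * m := by
      rcases Nat.eq_zero_or_pos m with rfl | hp
      · simp
      · exact Nat.le_mul_of_pos_left m hp
    have hexp : (m + 3) * (m + 2) = m * m + 5 * m + 6 := by ring
    omega


lemma pairs_ne (r k : ℕ) (hk : 3 ≤ k) (hr : k + 2 ≤ r)
    (f : Finset (Fin (r + 2)) → ℕ)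
    (hpart : ∀ A : Fin r → Finset (Fin (r + 2)),
      (∀ i j, i ≠ j → Disjoint (A i) (A j)) →
      (∀ x, ∃ i, x ∈ A i) →
      ∃ i, ∀ j, j ≠ i → f (A j) < f (A i))
    (a b : Fin (r + 2)) (hab : a ≠ b)
    (hM : ∀ x, f {x} ≤ f {a}) (hfb : f {b} = f {a})
    (e e' : Finset (Fin (r + 2))) (he2 : e.card = 2) (he'2 : e'.card = 2)
    (hd : Disjoint e e') (hae : a ∉ e ∪ e') (hbe : b ∉ e ∪ e') :
    f e ≠ f e' ∧ f {a} < max (f e) (f e') := by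
  have hr5 : 5 ≤ r := by omega
  set S := (e ∪ e')ᶜ with hSdef
  have hScard : S.card = r - 2 := by
    rw [hSdef, Finset.card_compl, Finset.card_union_of_disjoint hd, he2, he'2]
    have : Fintype.card (Fin (r + 2)) = r + 2 := Fintype.card_fin _
    omega
  set g := S.orderIsoOfFin hScard with hg
  have hgmem : ∀ m : Fin (r - 2), (g m : Fin (r + 2)) ∈ S := fun m => (g m).2
  have hSnot : ∀ x : Fin (r + 2), x ∈ S → x ∉ e ∧ x ∉ e' := by
    intro x hx
    rw [hSdef, Finset.mem_compl, Finset.mem_union] at hx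
    tauto
  have haS : a ∈ S := by rw [hSdef, Finset.mem_compl]; exact hae
  have hbS : b ∈ S := by rw [hSdef, Finset.mem_compl]; exact hbe
  set A : Fin r → Finset (Fin (r + 2)) := fun i =>
    if i.val = 0 then e else if i.val = 1 then e'
    else {(g ⟨i.val - 2, by have := i.isLt; omega⟩ : Fin (r + 2))} with hAdef
  have hchar : ∀ i : Fin r, (i.val = 0 ∧ A i = e) ∨ (i.val = 1 ∧ A i = e') ∨
      (2 ≤ i.val ∧ ∃ hlt : i.val - 2 < r - 2,
        A i = {(g ⟨i.val - 2, hlt⟩ : Fin (r + 2))}) := by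
    intro i
    by_cases h0 : i.val = 0
    · exact Or.inl ⟨h0, by rw [hAdef]; simp [h0]⟩
    by_cases h1 : i.val = 1
    · exact Or.inr (Or.inl ⟨h1, by rw [hAdef]; simp [h0, h1]⟩)
    · refine Or.inr (Or.inr ⟨by omega, ⟨by have := i.isLt; omega, ?_⟩⟩)
      rw [hAdef]
      simp only
      rw [if_neg h0, if_neg h1]
  have hsing : ∀ (x : Fin (r + 2)) (hx : x ∈ S),
      A ⟨(g.symm ⟨x, hx⟩).val + 2, by have := (g.symm ⟨x, hx⟩).isLt; omega⟩ = {x} := by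
    intro x hx
    set m := g.symm ⟨x, hx⟩ with hm
    have h2 : (⟨m.val + 2, by have := m.isLt; omega⟩ : Fin r).val = m.val + 2 := rfl
    rcases hchar ⟨m.val + 2, by have := m.isLt; omega⟩ with ⟨h, _⟩ | ⟨h, _⟩ | ⟨_, hlt, hA⟩
    · rw [h2] at h; omega
    · rw [h2] at h; omega
    · rw [hA]
      congr 1
      have : (⟨(⟨m.val + 2, by have := m.isLt; omega⟩ : Fin r).val - 2, hlt⟩ : Fin (r - 2)) = m := by
        apply Fin.ext; simp
      rw [this, hm]
      simp
  have hdisj : ∀ i j, i ≠ j → Disjoint (A i) (A j) := by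
    intro i j hij
    have hvij : i.val ≠ j.val := fun h => hij (Fin.ext h)
    rcases hchar i with ⟨h0, hAi⟩ | ⟨h0, hAi⟩ | ⟨h0, hlt, hAi⟩ <;>
      rcases hchar j with ⟨h0', hAj⟩ | ⟨h0', hAj⟩ | ⟨h0', hlt', hAj⟩ <;>
      rw [hAi, hAj]
    · omega
    · exact hd
    · exact Finset.disjoint_singleton_right.mpr (hSnot _ (hgmem _)).1
    · exact hd.symm
    · omega
    · exact Finset.disjoint_singleton_right.mpr (hSnot _ (hgmem _)).2
    · exact (Finset.disjoint_singleton_right.mpr (hSnot _ (hgmem _)).1).symm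
    · exact (Finset.disjoint_singleton_right.mpr (hSnot _ (hgmem _)).2).symm
    · have hne : (⟨i.val - 2, hlt⟩ : Fin (r - 2)) ≠ ⟨j.val - 2, hlt'⟩ := by
        intro h
        have := congrArg Fin.val h
        simp only at this
        omega
      refine Finset.disjoint_singleton.mpr (fun h => hne (g.injective (Subtype.ext h)))
  have hcov : ∀ x, ∃ i, x ∈ A i := by
    intro x
    by_cases hxe : x ∈ e
    · refine ⟨⟨0, by omega⟩, ?_⟩
      rcases hchar ⟨0, by omega⟩ with ⟨_, hA⟩ | ⟨h, _⟩ | ⟨h, _⟩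
      · rw [hA]; exact hxe
      · simp at h
      · simp at h
    by_cases hxe' : x ∈ e'
    · refine ⟨⟨1, by omega⟩, ?_⟩
      rcases hchar ⟨1, by omega⟩ with ⟨h, _⟩ | ⟨_, hA⟩ | ⟨h, _⟩
      · simp at h
      · rw [hA]; exact hxe'
      · simp at h
    · have hxS : x ∈ S := by rw [hSdef, Finset.mem_compl, Finset.mem_union]; tauto
      exact ⟨_, by rw [hsing x hxS]; exact Finset.mem_singleton_self x⟩
  obtain ⟨i0, hmax⟩ := hpart A hdisj hcov
  have hjalt : ((g.symm ⟨a, haS⟩) : ℕ) < r - 2 := (g.symm ⟨a, haS⟩).isLt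
  have hjblt : ((g.symm ⟨b, hbS⟩) : ℕ) < r - 2 := (g.symm ⟨b, hbS⟩).isLt
  have ja : Fin r := ⟨(g.symm ⟨a, haS⟩).val + 2, by omega⟩
  set ja : Fin r := ⟨(g.symm ⟨a, haS⟩).val + 2, by omega⟩ with hjadef
  set jb : Fin r := ⟨(g.symm ⟨b, hbS⟩).val + 2, by omega⟩ with hjbdef
  have haind : A ja = {a} := hsing a haS
  have hbind : A jb = {b} := hsing b hbS
  have hjaval : (ja : ℕ) = (g.symm ⟨a, haS⟩).val + 2 := rfl
  have hjbval : (jb : ℕ) = (g.symm ⟨b, hbS⟩).val + 2 := rfl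
  rcases hchar i0 with ⟨h0, hAi0⟩ | ⟨h0, hAi0⟩ | ⟨h0, hlt, hAi0⟩
  · -- max part is e
    have h1 : f e' < f e := by
      have := hmax ⟨1, by omega⟩ (by intro h; have := congrArg Fin.val h; simp [h0] at this)
      rcases hchar ⟨1, by omega⟩ with ⟨h, _⟩ | ⟨_, hA⟩ | ⟨h, _⟩
      · simp at h
      · rwa [hA, hAi0] at this
      · simp at h
    have h2 : f {a} < f e := by
      have hne : ja ≠ i0 := by
        intro h
        have := congrArg Fin.val h
        rw [hjaval, h0] at this
        omega
      have := hmax ja hne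
      rwa [haind, hAi0] at this
    exact ⟨h1.ne', lt_max_iff.mpr (Or.inl h2)⟩
  · have h1 : f e < f e' := by
      have := hmax ⟨0, by omega⟩ (by intro h; have := congrArg Fin.val h; simp [h0] at this)
      rcases hchar ⟨0, by omega⟩ with ⟨_, hA⟩ | ⟨h, _⟩ | ⟨h, _⟩
      · rwa [hA, hAi0] at this
      · simp at h
      · simp at h
    have h2 : f {a} < f e' := by
      have hne : ja ≠ i0 := by
        intro h
        have := congrArg Fin.val h
        rw [hjaval, h0] at this
        omega
      have := hmax ja hne
      rwa [haind, hAi0] at this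
    exact ⟨h1.ne, lt_max_iff.mpr (Or.inr h2)⟩
  · exfalso
    obtain ⟨x, hxeq⟩ : ∃ x : Fin (r + 2), (g ⟨i0.val - 2, hlt⟩ : Fin (r + 2)) = x := ⟨_, rfl⟩
    rw [hxeq] at hAi0
    have hxM : f {x} ≤ f {a} := hM x
    by_cases hax : a = x
    · have hbx : b ≠ x := fun h => hab (hax.trans h.symm)
      have hne : jb ≠ i0 := by
        intro h
        rw [h] at hbind
        rw [hAi0] at hbind
        exact hbx (Finset.singleton_inj.mp hbind.symm)
      have := hmax jb hne
      rw [hbind, hAi0] at this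
      omega
    · have hne : ja ≠ i0 := by
        intro h
        rw [h] at haind
        rw [hAi0] at haind
        exact hax (Finset.singleton_inj.mp haind.symm)
      have := hmax ja hne
      rw [haind, hAi0] at this
      omega

theorem stmt10 (r k : ℕ) (hk : 3 ≤ k) (hr : k + 2 ≤ r)
    (f : Finset (Fin (r + 2)) → ℕ) (hrange : ∀ S, 1 ≤ f S ∧ f S ≤ k)
    (hpart : ∀ A : Fin r → Finset (Fin (r + 2)),
      (∀ i j, i ≠ j → Disjoint (A i) (A j)) →
      (∀ x, ∃ i, x ∈ A i) →
      ∃ i, ∀ j, j ≠ i → f (A j) < f (A i)) :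
    ∃ i : Fin (r + 2), ∀ j : Fin (r + 2), j ≠ i →
      f ({j} : Finset (Fin (r + 2))) < f ({i} : Finset (Fin (r + 2))) := by
  by_contra hcon
  push_neg at hcon
  -- a maximizer a and a distinct b with the same (maximal) value
  obtain ⟨a, -, hM⟩ := Finset.exists_max_image (Finset.univ : Finset (Fin (r + 2)))
    (fun i => f {i}) ⟨0, Finset.mem_univ 0⟩
  have hM : ∀ x, f {x} ≤ f {a} := fun x => hM x (Finset.mem_univ x)
  obtain ⟨b, hba, hble⟩ := hcon a
  have hfb : f {b} = f {a} := le_antisymm (hM b) hble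
  have hab : a ≠ b := hba.symm
  by_cases hM2 : 2 ≤ f {a}
  · -- colour pairs in the complement of {a, b} by max (f e) (f {a})
    set U : Finset (Fin (r + 2)) := (Finset.univ.erase a).erase b with hU
    have hUcard : U.card = r := by
      rw [hU, Finset.card_erase_of_mem (Finset.mem_erase.mpr ⟨hba, Finset.mem_univ b⟩),
        Finset.card_erase_of_mem (Finset.mem_univ a), Finset.card_univ, Fintype.card_fin]
      omega
    have hnot : ∀ s ⊆ U, a ∉ s ∧ b ∉ s := by
      intro s hs
      constructor
      · intro h
        exact (Finset.mem_erase.mp (Finset.mem_of_mem_erase (hs h))).1 rfl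
      · intro h
        exact (Finset.mem_erase.mp (hs h)).1 rfl
    have hkb := kneser_bound (fun e => max (f e) (f {a})) U (by
      intro e he e' he' hc hc' hd
      have h1 := pairs_ne r k hk hr f hpart a b hab hM hfb e e' hc hc' hd
        (by rw [Finset.mem_union]; push_neg; exact ⟨(hnot e he).1, (hnot e' he').1⟩)
        (by rw [Finset.mem_union]; push_neg; exact ⟨(hnot e he).2, (hnot e' he').2⟩)
      rcases max_cases (f e) (f e') with ⟨hmx, hge⟩ | ⟨hmx, hgt⟩
      · -- max is f e, f {a} < f e
        have hlt : f {a} < f e := hmx ▸ h1.2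
        intro hcontra
        simp only [max_eq_left hlt.le] at hcontra
        rcases le_or_gt (f e') (f {a}) with h | h
        · rw [max_eq_right h] at hcontra; omega
        · rw [max_eq_left h.le] at hcontra; exact h1.1 hcontra
      · have hlt : f {a} < f e' := hmx ▸ h1.2
        intro hcontra
        simp only [max_eq_left hlt.le] at hcontra
        rcases le_or_gt (f e) (f {a}) with h | h
        · rw [max_eq_right h] at hcontra; omega
        · rw [max_eq_left h.le] at hcontra; exact h1.1 hcontra)
    have himg : ((U.powersetCard 2).image (fun e => max (f e) (f {a}))) ⊆
        Finset.Icc (f {a}) k := by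
      intro t ht
      obtain ⟨p, hp, rfl⟩ := Finset.mem_image.mp ht
      rw [Finset.mem_Icc]
      exact ⟨le_max_right _ _, max_le (hrange p).2 (hrange _).2⟩
    have hic : (Finset.Icc (f {a}) k).card = k + 1 - f {a} := Nat.card_Icc _ _
    have := (Finset.card_le_card himg).trans_eq hic
    rw [hUcard] at hkb
    omega
  · -- f {a} = 1, so every singleton has value 1
    have h1 : ∀ x : Fin (r + 2), f {x} = 1 := by
      intro x
      have := hM x
      have := (hrange ({x} : Finset (Fin (r + 2)))).1
      omega
    have hkb := kneser_bound f (Finset.univ : Finset (Fin (r + 2))) (by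
      intro e he e' he' hc hc' hd
      -- find two fresh elements outside e ∪ e'
      have hcard : 2 ≤ ((e ∪ e')ᶜ : Finset (Fin (r + 2))).card := by
        rw [Finset.card_compl, Finset.card_union_of_disjoint hd, hc, hc', Fintype.card_fin]
        omega
      obtain ⟨a', ha', b', hb', hab'⟩ := Finset.one_lt_card.mp (by omega : 1 < ((e ∪ e')ᶜ : Finset (Fin (r + 2))).card)
      have h2 := pairs_ne r k hk hr f hpart a' b' hab'
        (fun x => by rw [h1 x, h1 a']) (by rw [h1 b', h1 a']) e e' hc hc' hd
        (Finset.mem_compl.mp ha') (Finset.mem_compl.mp hb')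
      exact h2.1)
    have himg : (((Finset.univ : Finset (Fin (r + 2))).powersetCard 2).image f) ⊆
        Finset.Icc 1 k := by
      intro t ht
      obtain ⟨p, hp, rfl⟩ := Finset.mem_image.mp ht
      rw [Finset.mem_Icc]
      exact ⟨(hrange p).1, (hrange p).2⟩
    have hic : (Finset.Icc 1 k).card = k := by rw [Nat.card_Icc]; omega
    have := (Finset.card_le_card himg).trans_eq hic
    rw [Finset.card_univ, Fintype.card_fin] at hkb
    omega
end

section
/- Let k ≥ 3 and r ≥ 10k+1, and let f : 2^{[r+1]} → [k] be a function such that for every partition of [r+1] into r (possibly empty) parts A_1,...,A_r, the sequence f(A_1),...,f(A_r) has a unique maximum. Then f({1}),...,f({r+1}) has a unique maximum. -/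
theorem stmt11 (r k : ℕ) (hk : 3 ≤ k) (hr : 10 * k + 1 ≤ r)
    (f : Finset (Fin (r + 1)) → ℕ) (hrange : ∀ S, 1 ≤ f S ∧ f S ≤ k)
    (hpart : ∀ A : Fin r → Finset (Fin (r + 1)),
      (∀ i j, i ≠ j → Disjoint (A i) (A j)) →
      (∀ x, ∃ i, x ∈ A i) →
      ∃ i, ∀ j, j ≠ i → f (A j) < f (A i)) :
    ∃ i : Fin (r + 1), ∀ j : Fin (r + 1), j ≠ i →
      f ({j} : Finset (Fin (r + 1))) < f ({i} : Finset (Fin (r + 1))) := by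
  by_contra hcon
  push_neg at hcon
  have hr31 : 31 ≤ r := by omega
  -- a maximizes f over singletons
  obtain ⟨a, -, hamax⟩ := Finset.exists_max_image Finset.univ
    (fun i : Fin (r+1) => f {i}) ⟨⟨0, by omega⟩, Finset.mem_univ _⟩
  obtain ⟨b, hba, hfb⟩ := hcon a
  have hsing : ∀ x : Fin (r+1), f {x} ≤ f {a} := fun x => hamax x (Finset.mem_univ x)
  have hfab : f {b} = f {a} := le_antisymm (hsing b) hfb
  -- the set avoiding a and b
  set T : Finset (Fin (r+1)) := Finset.univ \ {a, b} with hTdef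
  have hT : T.card = r - 1 := by
    rw [hTdef, Finset.card_sdiff_of_subset (Finset.subset_univ _), Finset.card_univ]
    rw [Finset.card_insert_of_notMem (by simpa using hba.symm), Finset.card_singleton]
    simp
  have h42 : 4 * k + 2 ≤ r - 1 := by omega
  set e : Fin (4*k+2) → Fin (r+1) :=
    fun i => T.orderEmbOfFin hT (Fin.castLE h42 i) with hedef
  have he_inj : Function.Injective e := fun i j hij => by
    have := (T.orderEmbOfFin hT).injective hij
    exact Fin.castLE_injective h42 this
  have he_mem : ∀ i, e i ∈ T := fun i => T.orderEmbOfFin_mem hT _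
  have he_na : ∀ i, e i ≠ a := by
    intro i h
    have := he_mem i
    rw [h, hTdef] at this; simp at this
  have he_nb : ∀ i, e i ≠ b := by
    intro i h
    have := he_mem i
    rw [h, hTdef] at this; simp at this
  -- pairs
  set P : Fin (2*k+1) → Finset (Fin (r+1)) :=
    fun t => {e ⟨2*t.1, by have := t.2; omega⟩, e ⟨2*t.1+1, by have := t.2; omega⟩} with hPdef
  have hP_card : ∀ t, (P t).card = 2 := by
    intro t
    rw [hPdef]
    rw [Finset.card_insert_of_notMem (by
      simp only [Finset.mem_singleton]
      intro h
      have := he_inj h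
      simp [Fin.ext_iff] at this), Finset.card_singleton]
  have hP_na : ∀ t, a ∉ P t := by
    intro t h
    rw [hPdef] at h
    simp only [Finset.mem_insert, Finset.mem_singleton] at h
    rcases h with h | h <;> exact (he_na _ h.symm)
  have hP_nb : ∀ t, b ∉ P t := by
    intro t h
    rw [hPdef] at h
    simp only [Finset.mem_insert, Finset.mem_singleton] at h
    rcases h with h | h <;> exact (he_nb _ h.symm)
  have hP_disj : ∀ t t', t ≠ t' → Disjoint (P t) (P t') := by
    intro t t' htt
    rw [Finset.disjoint_left]
    intro x hx hx'
    rw [hPdef] at hx hx'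
    simp only [Finset.mem_insert, Finset.mem_singleton] at hx hx'
    have htv : t.1 ≠ t'.1 := fun h => htt (Fin.ext h)
    rcases hx with h | h <;> rcases hx' with h' | h' <;>
      · have := he_inj (h.symm.trans h')
        simp only [Fin.mk.injEq] at this
        omega
  -- pigeonhole: three pairs with equal value
  obtain ⟨y, -, hy⟩ := Finset.exists_lt_card_fiber_of_mul_lt_card_of_maps_to
    (s := (Finset.univ : Finset (Fin (2*k+1)))) (t := Finset.Icc 1 k)
    (f := fun t => f (P t)) (n := 2)
    (fun t _ => by simp [Finset.mem_Icc]; exact ⟨(hrange _).1, (hrange _).2⟩)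
    (by simp [Nat.card_Icc]; omega)
  rw [Finset.two_lt_card_iff] at hy
  obtain ⟨t1, t2, t3, ht1, ht2, ht3, h12, h13, h23⟩ := hy
  simp only [Finset.mem_filter, Finset.mem_univ, true_and] at ht1 ht2 ht3
  -- the union of the three chosen pairs
  set Q : Finset (Fin (r+1)) := P t1 ∪ P t2 ∪ P t3 with hQdef
  have hQcard : Q.card = 6 := by
    have hd : Disjoint (P t1 ∪ P t2) (P t3) :=
      Finset.disjoint_union_left.2 ⟨hP_disj _ _ h13, hP_disj _ _ h23⟩
    rw [hQdef, Finset.card_union_of_disjoint hd, Finset.card_union_of_disjoint (hP_disj _ _ h12),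
      hP_card, hP_card, hP_card]
  set Rs : Finset (Fin (r+1)) := Finset.univ \ Q with hRdef
  have hRcard : Rs.card = r - 5 := by
    rw [hRdef, Finset.card_sdiff_of_subset (Finset.subset_univ _), Finset.card_univ, Fintype.card_fin, hQcard]
    omega
  set remb : Fin (r-5) → Fin (r+1) := fun x => Rs.orderEmbOfFin hRcard x with hrembdef
  have hremb_inj : Function.Injective remb := fun x y h => (Rs.orderEmbOfFin hRcard).injective h
  have hremb_mem : ∀ x, remb x ∈ Rs := fun x => Rs.orderEmbOfFin_mem hRcard x
  have hremb_surj : ∀ z ∈ Rs, ∃ x, remb x = z := by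
    intro z hz
    have : z ∈ Set.range (Rs.orderEmbOfFin hRcard) := by
      rw [Finset.range_orderEmbOfFin]; exact hz
    exact this
  -- the partition
  set A : Fin r → Finset (Fin (r+1)) := fun j =>
    if h : j.1 < r - 5 then {remb ⟨j.1, h⟩}
    else if j.1 = r - 5 then P t1
    else if j.1 = r - 4 then P t2
    else if j.1 = r - 3 then P t3
    else ∅ with hAdef
  have hA_lt : ∀ (j : Fin r) (h : j.1 < r - 5), A j = {remb ⟨j.1, h⟩} := by
    intro j h; rw [hAdef]; simp only [h, dif_pos]
  have hA5 : ∀ (j : Fin r), j.1 = r - 5 → A j = P t1 := by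
    intro j h; rw [hAdef]; simp only
    rw [dif_neg (by omega), if_pos h]
  have hA4 : ∀ (j : Fin r), j.1 = r - 4 → A j = P t2 := by
    intro j h; rw [hAdef]; simp only
    rw [dif_neg (by omega), if_neg (by omega), if_pos h]
  have hA3 : ∀ (j : Fin r), j.1 = r - 3 → A j = P t3 := by
    intro j h; rw [hAdef]; simp only
    rw [dif_neg (by omega), if_neg (by omega), if_neg (by omega), if_pos h]
  have hAe : ∀ (j : Fin r), r - 3 < j.1 → A j = ∅ := by
    intro j h; rw [hAdef]; simp only
    rw [dif_neg (by omega), if_neg (by omega), if_neg (by omega), if_neg (by omega)]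
  -- disjointness helpers
  have hd_sp : ∀ (x : Fin (r-5)) t, Disjoint ({remb x} : Finset (Fin (r+1))) (P t) →
      True := fun _ _ _ => trivial
  have hPQ : ∀ t, t = t1 ∨ t = t2 ∨ t = t3 → P t ⊆ Q := by
    rintro t (rfl | rfl | rfl) <;> rw [hQdef] <;> intro x hx <;> simp [hx]
  have hd_singleton_pair : ∀ (x : Fin (r-5)) t, t = t1 ∨ t = t2 ∨ t = t3 →
      Disjoint ({remb x} : Finset (Fin (r+1))) (P t) := by
    intro x t ht
    rw [Finset.disjoint_left]
    intro z hz hz'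
    rw [Finset.mem_singleton] at hz
    subst hz
    have := hremb_mem x
    rw [hRdef] at this
    simp only [Finset.mem_sdiff, Finset.mem_univ, true_and] at this
    exact this (hPQ t ht hz')
  -- disjointness
  have hdisj : ∀ i j, i ≠ j → Disjoint (A i) (A j) := by
    have key : ∀ i j : Fin r, i.1 < j.1 → Disjoint (A i) (A j) := by
      intro i j hij
      by_cases hi : i.1 < r - 5
      · rw [hA_lt i hi]
        by_cases hj : j.1 < r - 5
        · rw [hA_lt j hj, Finset.disjoint_singleton]
          intro h
          have := hremb_inj h
          simp only [Fin.mk.injEq] at this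
          omega
        · have hj2 := j.2
          have : j.1 = r-5 ∨ j.1 = r-4 ∨ j.1 = r-3 ∨ r-3 < j.1 := by omega
          rcases this with h|h|h|h
          · rw [hA5 j h]; exact hd_singleton_pair _ _ (Or.inl rfl)
          · rw [hA4 j h]; exact hd_singleton_pair _ _ (Or.inr (Or.inl rfl))
          · rw [hA3 j h]; exact hd_singleton_pair _ _ (Or.inr (Or.inr rfl))
          · rw [hAe j h]; exact Finset.disjoint_empty_right _
      · have hj2 := j.2
        have hic : i.1 = r-5 ∨ i.1 = r-4 ∨ i.1 = r-3 ∨ r-3 < i.1 := by omega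
        have hjc : j.1 = r-4 ∨ j.1 = r-3 ∨ r-3 < j.1 := by omega
        rcases hjc with h'|h'|h'
        · rw [hA4 j h']
          rcases hic with h|h|h|h
          · rw [hA5 i h]; exact hP_disj _ _ h12
          all_goals omega
        · rw [hA3 j h']
          rcases hic with h|h|h|h
          · rw [hA5 i h]; exact hP_disj _ _ h13
          · rw [hA4 i h]; exact hP_disj _ _ h23
          all_goals omega
        · rw [hAe j h']; exact Finset.disjoint_empty_right _
    intro i j hij
    rcases lt_trichotomy i.1 j.1 with h|h|h
    · exact key i j h
    · exact absurd (Fin.ext h) hij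
    · exact (key j i h).symm
  -- coverage
  have hcov : ∀ x, ∃ i, x ∈ A i := by
    intro x
    by_cases hx : x ∈ Q
    · rw [hQdef] at hx
      simp only [Finset.mem_union] at hx
      rcases hx with (hx | hx) | hx
      · exact ⟨⟨r-5, by omega⟩, by rw [hA5 _ rfl]; exact hx⟩
      · exact ⟨⟨r-4, by omega⟩, by rw [hA4 _ rfl]; exact hx⟩
      · exact ⟨⟨r-3, by omega⟩, by rw [hA3 _ rfl]; exact hx⟩
    · have hxR : x ∈ Rs := by rw [hRdef]; simp only [Finset.mem_sdiff, Finset.mem_univ, true_and]; exact hx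
      obtain ⟨z, hz⟩ := hremb_surj x hxR
      have hzr : z.1 < r := lt_of_lt_of_le z.2 (by omega)
      refine ⟨⟨z.1, hzr⟩, ?_⟩
      rw [hA_lt _ z.2, Finset.mem_singleton]
      exact hz.symm
  obtain ⟨i, hi⟩ := hpart A hdisj hcov
  -- a and b are in Rs
  have haR : a ∈ Rs := by
    rw [hRdef]
    simp only [Finset.mem_sdiff, Finset.mem_univ, true_and, hQdef, Finset.mem_union]
    rintro ((h | h) | h)
    exacts [hP_na _ h, hP_na _ h, hP_na _ h]
  have hbR : b ∈ Rs := by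
    rw [hRdef]
    simp only [Finset.mem_sdiff, Finset.mem_univ, true_and, hQdef, Finset.mem_union]
    rintro ((h | h) | h)
    exacts [hP_nb _ h, hP_nb _ h, hP_nb _ h]
  obtain ⟨za, hza⟩ := hremb_surj a haR
  obtain ⟨zb, hzb⟩ := hremb_surj b hbR
  have hzab : za.1 ≠ zb.1 := by
    intro h
    have : remb za = remb zb := congrArg remb (Fin.ext h)
    rw [hza, hzb] at this
    exact hba this.symm
  have hzaR : za.1 < r := lt_of_lt_of_le za.2 (by omega)
  have hzbR : zb.1 < r := lt_of_lt_of_le zb.2 (by omega)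
  have hAa : A ⟨za.1, hzaR⟩ = {a} := by
    rw [hA_lt ⟨za.1, hzaR⟩ za.2]
    exact congrArg (fun z => ({z} : Finset (Fin (r+1)))) hza
  have hAb : A ⟨zb.1, hzbR⟩ = {b} := by
    rw [hA_lt ⟨zb.1, hzbR⟩ zb.2]
    exact congrArg (fun z => ({z} : Finset (Fin (r+1)))) hzb
  -- case analysis on the unique maximal part
  have hi2 := i.2
  have hcases : i.1 < r - 5 ∨ i.1 = r-5 ∨ i.1 = r-4 ∨ i.1 = r-3 ∨ r-3 < i.1 := by omega
  rcases hcases with h|h|h|h|h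
  · by_cases hia : i = (⟨za.1, hzaR⟩ : Fin r)
    · have hne : (⟨zb.1, hzbR⟩ : Fin r) ≠ i := by
        intro hh
        have : zb.1 = i.1 := congrArg Fin.val hh
        have h2 : i.1 = za.1 := congrArg Fin.val hia
        omega
      have h3 := hi _ hne
      rw [hAb, hia, hAa] at h3
      rw [hfab] at h3
      exact lt_irrefl _ h3
    · have hne : (⟨za.1, hzaR⟩ : Fin r) ≠ i := fun hh => hia hh.symm
      have h3 := hi _ hne
      rw [hAa, hA_lt i h] at h3
      exact absurd (hsing (remb ⟨i.1, h⟩)) (not_le.2 h3)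
  · have hne : (⟨r-4, by omega⟩ : Fin r) ≠ i := by
      intro hh
      have : r - 4 = i.1 := congrArg Fin.val hh
      omega
    have h3 := hi _ hne
    rw [hA4 _ rfl, hA5 i h, ht1, ht2] at h3
    exact lt_irrefl _ h3
  · have hne : (⟨r-5, by omega⟩ : Fin r) ≠ i := by
      intro hh
      have : r - 5 = i.1 := congrArg Fin.val hh
      omega
    have h3 := hi _ hne
    rw [hA5 _ rfl, hA4 i h, ht1, ht2] at h3
    exact lt_irrefl _ h3
  · have hne : (⟨r-5, by omega⟩ : Fin r) ≠ i := by
      intro hh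
      have : r - 5 = i.1 := congrArg Fin.val hh
      omega
    have h3 := hi _ hne
    rw [hA5 _ rfl, hA3 i h, ht1, ht3] at h3
    exact lt_irrefl _ h3
  · by_cases h2 : i.1 = r - 2
    · have hne : (⟨r-1, by omega⟩ : Fin r) ≠ i := by
        intro hh
        have : r - 1 = i.1 := congrArg Fin.val hh
        omega
      have h3 := hi _ hne
      rw [hAe _ (show r - 3 < r - 1 by omega), hAe i h] at h3
      exact lt_irrefl _ h3
    · have hne : (⟨r-2, by omega⟩ : Fin r) ≠ i := by
        intro hh
        have : r - 2 = i.1 := congrArg Fin.val hh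
        omega
      have h3 := hi _ hne
      rw [hAe _ (show r - 3 < r - 2 by omega), hAe i h] at h3
      exact lt_irrefl _ h3
end

section
/- For k ≥ 3, define f : 2^{[k+1]} → [k] by: f(S) = 1 if |S| ≤ 1; f(S) = k if |S| ≥ k; otherwise f(S) = max over x ∈ S of max(2, x-1). Then for every partition of [k+1] into k (possibly empty) parts A_1,...,A_k, the sequence f(A_1),...,f(A_k) has a unique maximum. -/
lemma aux_distinct (k : ℕ) (hk : 3 ≤ k) (P Q : Finset (Fin (k + 1)))
    (hd : Disjoint P Q) (hP : 2 ≤ P.card) (hQ : 2 ≤ Q.card)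
    (heq : P.sup (fun x => max 2 (x : ℕ)) = Q.sup (fun x => max 2 (x : ℕ))) : False := by
  set v := P.sup (fun x => max 2 (x : ℕ)) with hv
  have hPne : P.Nonempty := Finset.card_pos.mp (by omega)
  have hQne : Q.Nonempty := Finset.card_pos.mp (by omega)
  by_cases h3 : 3 ≤ v
  · obtain ⟨x, hx, hxv⟩ := Finset.exists_mem_eq_sup P hPne (fun x => max 2 (x : ℕ))
    obtain ⟨y, hy, hyv⟩ := Finset.exists_mem_eq_sup Q hQne (fun x => max 2 (x : ℕ))
    rw [← heq] at hyv
    have hxn : (x : ℕ) = v := by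
      have := hxv.symm.trans hv.symm
      simp only [hv] at *
      omega
    have hyn : (y : ℕ) = v := by omega
    have hxy : x = y := Fin.ext (by omega)
    exact (Finset.disjoint_left.mp hd hx) (hxy ▸ hy)
  · have himg : (P ∪ Q).image (fun x : Fin (k + 1) => (x : ℕ)) ⊆ Finset.range 3 := by
      intro n hn
      simp only [Finset.mem_image] at hn
      obtain ⟨x, hx, rfl⟩ := hn
      have hle : max 2 (x : ℕ) ≤ v := by
        rcases Finset.mem_union.mp hx with h | h
        · exact Finset.le_sup (f := fun x : Fin (k+1) => max 2 (x : ℕ)) h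
        · rw [heq]; exact Finset.le_sup (f := fun x : Fin (k+1) => max 2 (x : ℕ)) h
      simp only [Finset.mem_range]
      omega
    have hcard : (P ∪ Q).card ≤ 3 := by
      have h1 : (P ∪ Q).card = ((P ∪ Q).image (fun x : Fin (k + 1) => (x : ℕ))).card :=
        (Finset.card_image_of_injective _ Fin.val_injective).symm
      have h2 := Finset.card_le_card himg
      simp only [Finset.card_range] at h2
      omega
    have := Finset.card_union_of_disjoint hd
    omega

theorem stmt12 (k : ℕ) (hk : 3 ≤ k)
    (f : Finset (Fin (k + 1)) → ℕ)
    (hf : ∀ S : Finset (Fin (k + 1)),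
      f S = if S.card ≤ 1 then 1
            else if k ≤ S.card then k
            else S.sup (fun x => max 2 (x : ℕ)))
    (A : Fin k → Finset (Fin (k + 1)))
    (hdisj : ∀ i j, i ≠ j → Disjoint (A i) (A j))
    (hcover : ∀ x, ∃ i, x ∈ A i) :
    ∃ i, ∀ j, j ≠ i → f (A j) < f (A i) := by
  classical
  have hsum : ∑ i, (A i).card = k + 1 := by
    rw [← Finset.card_biUnion (fun i _ j _ hij => hdisj i j hij)]
    have huniv : Finset.univ.biUnion A = Finset.univ := by
      apply Finset.eq_univ_iff_forall.mpr
      intro x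
      obtain ⟨i, hi⟩ := hcover x
      exact Finset.mem_biUnion.mpr ⟨i, Finset.mem_univ i, hi⟩
    rw [huniv, Finset.card_univ, Fintype.card_fin]
  have hpair : ∀ i j : Fin k, i ≠ j → (A i).card + (A j).card ≤ k + 1 := by
    intro i j hij
    have hsub : ({i, j} : Finset (Fin k)) ⊆ Finset.univ := Finset.subset_univ _
    have := Finset.sum_le_sum_of_subset (f := fun i => (A i).card) hsub
    rw [Finset.sum_pair hij, hsum] at this
    exact this
  by_cases hbig : ∃ i, k ≤ (A i).card
  · obtain ⟨i, hi⟩ := hbig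
    refine ⟨i, fun j hj => ?_⟩
    have hj1 : (A j).card ≤ 1 := by
      have := hpair i j (Ne.symm hj)
      omega
    rw [hf, hf]
    rw [if_pos hj1, if_neg (by omega), if_pos hi]
    omega
  · push_neg at hbig
    have hex2 : ∃ i, 2 ≤ (A i).card := by
      by_contra h
      push_neg at h
      have : ∑ i, (A i).card ≤ ∑ _i : Fin k, 1 :=
        Finset.sum_le_sum (fun i _ => by have := h i; omega)
      simp at this
      omega
    set s : Finset (Fin k) := Finset.univ.filter (fun i => 2 ≤ (A i).card) with hs
    have hsne : s.Nonempty := by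
      obtain ⟨i, hi⟩ := hex2
      exact ⟨i, by simp [hs, hi]⟩
    obtain ⟨i, his, hmax⟩ := Finset.exists_max_image s (fun i => f (A i)) hsne
    have hival : ∀ j ∈ s, f (A j) = (A j).sup (fun x => max 2 (x : ℕ)) ∧ 2 ≤ f (A j) := by
      intro j hjs
      have hj2 : 2 ≤ (A j).card := (Finset.mem_filter.mp hjs).2
      have hjk : (A j).card < k := hbig j
      rw [hf, if_neg (by omega), if_neg (by omega)]
      obtain ⟨x, hx⟩ := Finset.card_pos.mp (show 0 < (A j).card by omega)
      refine ⟨rfl, le_trans (le_max_left 2 _) (Finset.le_sup (f := fun x : Fin (k+1) => max 2 (x : ℕ)) hx)⟩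
    refine ⟨i, fun j hj => ?_⟩
    obtain ⟨hieq, hi2⟩ := hival i his
    by_cases hjs : j ∈ s
    · obtain ⟨hjeq, _⟩ := hival j hjs
      have hle := hmax j hjs
      rcases lt_or_eq_of_le hle with h | h
      · exact h
      · exfalso
        exact aux_distinct k hk (A j) (A i) (hdisj j i hj) (Finset.mem_filter.mp hjs).2
          (Finset.mem_filter.mp his).2 (by rw [← hjeq, ← hieq, h])
    · have hj1 : (A j).card ≤ 1 := by
        simp only [hs, Finset.mem_filter, Finset.mem_univ, true_and] at hjs
        omega
      rw [hf, if_pos hj1]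
      omega
end

section
/- For k ≥ 3, define f : 2^{[k]} → [k] by: f(S) = 1 if |S| = 1; f(∅) = 2; f(S) = k if |S| ≥ k; otherwise f(S) = max over x ∈ S of max(3, x). Then for every partition of [k] into k+1 (possibly empty) parts A_1,...,A_{k+1}, the sequence f(A_1),...,f(A_{k+1}) has a unique maximum. -/
open Finset

/-!
Parts of size at least two get values at least `3`, and two disjoint such parts never get the same
value: a common value `v ≥ 4` forces both parts to have largest element `v - 1`, while a common
value `3` puts at least four elements below `3`. So a maximal value that is attained twice is at
most `2`; then every part has at most one element, and since `k` elements are spread over `k + 1`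
parts, exactly one part is empty, and it alone attains the value `2`.
-/

section Partition

variable {ι α : Type*} [Fintype ι] [Fintype α] [DecidableEq α] {A : ι → Finset α}

theorem sum_card_eq_card_of_partition (hdisj : ∀ i j, i ≠ j → Disjoint (A i) (A j))
    (hcover : ∀ x, ∃ i, x ∈ A i) : ∑ i, #(A i) = Fintype.card α := by
  rw [← card_biUnion fun i _ j _ hij => hdisj i j hij, ← card_univ]
  congr 1
  exact eq_univ_of_forall fun x => by simpa using hcover x

theorem existsUnique_eq_empty_of_partition (hdisj : ∀ i j, i ≠ j → Disjoint (A i) (A j))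
    (hcover : ∀ x, ∃ i, x ∈ A i) (hsmall : ∀ i, #(A i) ≤ 1)
    (hcard : Fintype.card ι = Fintype.card α + 1) : ∃! i, A i = ∅ := by
  have hnonempty : #{i | ¬A i = ∅} = Fintype.card α := by
    rw [← sum_card_eq_card_of_partition hdisj hcover, card_filter]
    refine sum_congr rfl fun i _ => ?_
    have := hsmall i
    split_ifs with h
    · rw [card_eq_zero.mpr h]
    · have := card_pos.mpr (nonempty_iff_ne_empty.mpr h)
      omega
  have hempty : #{i | A i = ∅} = 1 := by
    have := card_filter_add_card_filter_not (s := univ) fun i => A i = ∅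
    rw [hnonempty, card_univ] at this
    omega
  obtain ⟨l, hl⟩ := card_eq_one.mp hempty
  have hl' (m : ι) : A m = ∅ ↔ m = l := by simpa using Finset.ext_iff.mp hl m
  exact ⟨l, (hl' l).mpr rfl, fun m => (hl' m).mp⟩

end Partition

def uniqueMaxMap (k : ℕ) (S : Finset (Fin k)) : ℕ :=
  if #S = 1 then 1
  else if S = ∅ then 2
  else if k ≤ #S then k
  else S.sup (fun x => max 3 ((x : ℕ) + 1))

section UniqueMaxMap

variable {k : ℕ} {S T : Finset (Fin k)}

@[simp]
theorem uniqueMaxMap_empty : uniqueMaxMap k ∅ = 2 := by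
  simp [uniqueMaxMap]

theorem uniqueMaxMap_of_card_le_one (hS : #S ≤ 1) :
    uniqueMaxMap k S = if S = ∅ then 2 else 1 := by
  rcases Nat.le_one_iff_eq_zero_or_eq_one.mp hS with h | h
  · simp [uniqueMaxMap, card_eq_zero.mp h]
  · have hne : S ≠ ∅ := by rintro rfl; simp at h
    simp [uniqueMaxMap, h, hne]

theorem eq_empty_of_two_le_uniqueMaxMap (hS : #S ≤ 1) (h : 2 ≤ uniqueMaxMap k S) : S = ∅ := by
  rw [uniqueMaxMap_of_card_le_one hS] at h
  split_ifs at h with hS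
  · exact hS
  · omega

theorem uniqueMaxMap_of_two_le_card (hS : 2 ≤ #S) (hSk : #S < k) :
    uniqueMaxMap k S = S.sup (fun x => max 3 ((x : ℕ) + 1)) := by
  have hne : S ≠ ∅ := by rintro rfl; simp at hS
  simp [uniqueMaxMap, hne, show #S ≠ 1 by omega, show ¬k ≤ #S by omega]

theorem three_le_uniqueMaxMap (hk : 3 ≤ k) (hS : 2 ≤ #S) : 3 ≤ uniqueMaxMap k S := by
  rcases lt_or_ge #S k with hSk | hSk
  · obtain ⟨x, hx⟩ := card_pos.mp (by omega : 0 < #S)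
    rw [uniqueMaxMap_of_two_le_card hS hSk]
    exact (le_max_left _ _).trans (le_sup (f := fun x : Fin k => max 3 ((x : ℕ) + 1)) hx)
  · have hne : S ≠ ∅ := by rintro rfl; simp at hS
    simpa [uniqueMaxMap, hne, show #S ≠ 1 by omega, hSk] using hk

theorem sup_max_three_ne_of_disjoint (hST : Disjoint S T) (hS : 2 ≤ #S) (hT : 2 ≤ #T) :
    S.sup (fun x => max 3 ((x : ℕ) + 1)) ≠ T.sup (fun x => max 3 ((x : ℕ) + 1)) := by
  set φ : Fin k → ℕ := fun x => max 3 ((x : ℕ) + 1)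
  intro h
  obtain ⟨a, haS, ha⟩ := exists_mem_eq_sup S (card_pos.mp (by omega)) φ
  obtain ⟨b, hbT, hb⟩ := exists_mem_eq_sup T (card_pos.mp (by omega)) φ
  by_cases h3 : φ a = 3
  · have hbound : ∀ x ∈ S ∪ T, φ x ≤ 3 := by
      intro x hx
      rcases mem_union.mp hx with hx | hx
      · exact (le_sup hx).trans (ha.trans h3).le
      · exact (le_sup hx).trans ((h.symm.trans ha).trans h3).le
    have hbelow : (S ∪ T).map Fin.valEmbedding ⊆ range 3 := by
      simp only [subset_iff, mem_map, mem_range, Fin.valEmbedding_apply]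
      rintro _ ⟨x, hx, rfl⟩
      have : max 3 ((x : ℕ) + 1) ≤ 3 := hbound x hx
      omega
    have := card_le_card hbelow
    rw [card_map, card_range, card_union_of_disjoint hST] at this
    omega
  · have hab : a = b := by
      have : φ a = φ b := ha ▸ hb ▸ h
      simp only [φ] at this h3
      omega
    exact disjoint_left.mp hST haS (hab ▸ hbT)

theorem uniqueMaxMap_le_two_of_disjoint (hST : Disjoint S T)
    (h : uniqueMaxMap k S = uniqueMaxMap k T) : uniqueMaxMap k S ≤ 2 := by
  by_contra! h3
  have two_le_card {U : Finset (Fin k)} (hU : 2 < uniqueMaxMap k U) : 2 ≤ #U := by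
    by_contra! hU1
    rw [uniqueMaxMap_of_card_le_one (by omega)] at hU
    split_ifs at hU <;> omega
  have hS := two_le_card h3
  have hT := two_le_card (h ▸ h3)
  have hunion : #S + #T ≤ k := by
    simpa [← card_union_of_disjoint hST] using card_le_univ (S ∪ T)
  rw [uniqueMaxMap_of_two_le_card hS (by omega), uniqueMaxMap_of_two_le_card hT (by omega)] at h
  exact sup_max_three_ne_of_disjoint hST hS hT h

end UniqueMaxMap

theorem stmt13 (k : ℕ) (hk : 3 ≤ k)
    (f : Finset (Fin k) → ℕ)
    (hf : ∀ S : Finset (Fin k),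
      f S = if S.card = 1 then 1
            else if S = ∅ then 2
            else if k ≤ S.card then k
            else S.sup (fun x => max 3 ((x : ℕ) + 1)))
    (A : Fin (k + 1) → Finset (Fin k))
    (hdisj : ∀ i j, i ≠ j → Disjoint (A i) (A j))
    (hcover : ∀ x, ∃ i, x ∈ A i) :
    ∃ i, ∀ j, j ≠ i → f (A j) < f (A i) := by
  obtain rfl : f = uniqueMaxMap k := funext hf
  obtain ⟨i, hi⟩ := Finite.exists_max fun l => uniqueMaxMap k (A l)
  refine ⟨i, fun j hji => (hi j).lt_of_ne fun heq => hji ?_⟩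
  have hi2 : uniqueMaxMap k (A i) ≤ 2 :=
    uniqueMaxMap_le_two_of_disjoint (hdisj i j hji.symm) heq.symm
  have hsmall (l : Fin (k + 1)) : #(A l) ≤ 1 := by
    by_contra! hl
    have := three_le_uniqueMaxMap hk hl
    have := hi l
    omega
  obtain ⟨l, hAl, hl⟩ := existsUnique_eq_empty_of_partition hdisj hcover hsmall (by simp)
  have hi_ge : 2 ≤ uniqueMaxMap k (A i) := by
    simpa [hAl] using hi l
  have hAi := eq_empty_of_two_le_uniqueMaxMap (hsmall i) hi_ge
  have hAj := eq_empty_of_two_le_uniqueMaxMap (hsmall j) (heq ▸ hi_ge)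
  exact (hl j hAj).trans (hl i hAi).symm
end
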